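/- arXiv:1601.03183 — 5 statements merged into one kernel-verified Lean document; each statement's English description precedes it below -/
import Mathlib

section
/- Define F : ℝ → ℝ by F(x) = sinh((π−α)x)/sinh(πx) for x ≠ 0 and F(0) = 1 − α/π, where 0 < α < π. Then F is an even, positive, continuous function, F is strictly decreasing on [0, ∞), F(x) → 0 as x → ∞, and the range of F is the interval (0, 1 − α/π]. -/
/-!
Put `b = π - α < c = π`, so that `F x = sinh (b x) / sinh (c x)` for `x ≠ 0`. Evenness and
positivity are immediate, and `F 0 = b / c` is the limit of `(sinh (b x) / x) / (sinh (c x) / x)`.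
For `x > 0` the sign of `F'` is that of `b coth (b x) - c coth (c x)`, which is negative because
`t ↦ t coth t` increases: its derivative is `(sinh (2t) / 2 - t) / sinh² t > 0`. Decay follows
from `sinh (c x) ≥ sinh (b x) cosh ((c - b) x)`, and the range is then given by the intermediate
value theorem on `[0, N]`.
-/

open Real Set Filter Topology

theorem Function.Even.apply_abs {α β : Type*} [AddGroup α] [LinearOrder α] {f : α → β}
    (hf : f.Even) (x : α) : f |x| = f x := by
  rcases abs_choice x with h | h <;> rw [h]
  exact hf x

theorem Function.Even.range_eq_Ioc {f : ℝ → ℝ} (heven : f.Even) (hpos : ∀ x, 0 < f x)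
    (hcont : Continuous f) (hanti : AntitoneOn f (Ici 0)) (hlim : Tendsto f atTop (𝓝 0)) :
    range f = Ioc 0 (f 0) := by
  refine Subset.antisymm ?_ ?_
  · rintro _ ⟨x, rfl⟩
    rw [← heven.apply_abs x]
    exact ⟨hpos _, hanti self_mem_Ici (abs_nonneg x) (abs_nonneg x)⟩
  · rintro y ⟨hy0, hy⟩
    obtain ⟨N, hNy, hN⟩ :=
      ((hlim.eventually (gt_mem_nhds hy0)).and (eventually_ge_atTop 0)).exists
    obtain ⟨x, -, hx⟩ := intermediate_value_Icc' hN hcont.continuousOn ⟨hNy.le, hy⟩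
    exact ⟨x, hx⟩

namespace Real

theorem tendsto_cosh_atTop : Tendsto cosh atTop atTop := by
  refine tendsto_atTop_mono (fun x => ?_) (tendsto_exp_atTop.atTop_div_const two_pos)
  rw [cosh_eq]
  gcongr
  linarith [exp_pos (-x)]

theorem tendsto_sinh_mul_div_self (k : ℝ) :
    Tendsto (fun x => sinh (k * x) / x) (𝓝[≠] 0) (𝓝 k) := by
  simpa [div_eq_inv_mul] using ((hasDerivAt_id (0 : ℝ)).const_mul k).sinh.tendsto_slope_zero

theorem strictMonoOn_mul_cosh_div_sinh : StrictMonoOn (fun t => t * cosh t / sinh t) (Ioi 0) := by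
  have hderiv : ∀ t ∈ Ioi (0 : ℝ),
      HasDerivAt (fun t => t * cosh t / sinh t) ((sinh t * cosh t - t) / sinh t ^ 2) t := by
    intro t ht
    refine (((hasDerivAt_id' t).mul (hasDerivAt_cosh t)).div (hasDerivAt_sinh t)
      (sinh_pos_iff.2 ht).ne').congr_deriv ?_
    simp only [Pi.mul_apply]
    linear_combination (-t / sinh t ^ 2) * cosh_sq_sub_sinh_sq t
  refine strictMonoOn_of_hasDerivWithinAt_pos (convex_Ioi 0)
    (f' := fun t => (sinh t * cosh t - t) / sinh t ^ 2)
    (fun t ht => (hderiv t ht).continuousAt.continuousWithinAt) ?_ ?_ <;> rw [interior_Ioi]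
  · exact fun t ht => (hderiv t ht).hasDerivWithinAt
  · intro t ht
    have h2t : 2 * t < 2 * sinh t * cosh t := by
      rw [← sinh_two_mul]
      exact self_lt_sinh_iff.2 (by linarith [mem_Ioi.1 ht])
    have hs := sinh_pos_iff.2 ht
    exact div_pos (by linarith) (by positivity)

theorem mul_cosh_mul_sinh_lt_mul_sinh_mul_cosh {b c x : ℝ} (hb : 0 < b) (hbc : b < c)
    (hx : 0 < x) : b * cosh (b * x) * sinh (c * x) < c * sinh (b * x) * cosh (c * x) := by
  have hbx : 0 < b * x := mul_pos hb hx
  have hcx : 0 < c * x := mul_pos (hb.trans hbc) hx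
  have h := strictMonoOn_mul_cosh_div_sinh hbx hcx (mul_lt_mul_of_pos_right hbc hx)
  rw [div_lt_div_iff₀ (sinh_pos_iff.2 hbx) (sinh_pos_iff.2 hcx)] at h
  refine lt_of_mul_lt_mul_right ?_ hx.le
  linear_combination h

theorem hasDerivAt_sinh_mul_div_sinh_mul {b c x : ℝ} (hx : sinh (c * x) ≠ 0) :
    HasDerivAt (fun x => sinh (b * x) / sinh (c * x))
      ((b * cosh (b * x) * sinh (c * x) - c * sinh (b * x) * cosh (c * x)) / sinh (c * x) ^ 2)
      x := by
  have hsinh (k : ℝ) : HasDerivAt (fun x => sinh (k * x)) (k * cosh (k * x)) x := by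
    simpa [mul_comm] using ((hasDerivAt_id x).const_mul k).sinh
  exact ((hsinh b).div (hsinh c) hx).congr_deriv (by ring)

end Real

noncomputable def sinhRatio (b c : ℝ) : ℝ → ℝ :=
  Function.update (fun x => sinh (b * x) / sinh (c * x)) 0 (b / c)

namespace sinhRatio

variable {b c : ℝ}

theorem apply_zero : sinhRatio b c 0 = b / c := Function.update_self ..

theorem apply_of_ne {x : ℝ} (hx : x ≠ 0) : sinhRatio b c x = sinh (b * x) / sinh (c * x) :=
  Function.update_of_ne hx ..

theorem even : (sinhRatio b c).Even := by
  intro x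
  rcases eq_or_ne x 0 with rfl | hx
  · rw [neg_zero]
  · rw [apply_of_ne hx, apply_of_ne (neg_ne_zero.2 hx), mul_neg, mul_neg, sinh_neg, sinh_neg,
      neg_div_neg_eq]

theorem pos (hb : 0 < b) (hc : 0 < c) (x : ℝ) : 0 < sinhRatio b c x := by
  rw [← even.apply_abs]
  rcases (abs_nonneg x).eq_or_lt with h | h
  · rw [← h, apply_zero]
    exact div_pos hb hc
  · rw [apply_of_ne h.ne']
    exact div_pos (sinh_pos_iff.2 (mul_pos hb h)) (sinh_pos_iff.2 (mul_pos hc h))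

theorem continuous (hc : c ≠ 0) : Continuous (sinhRatio b c) := by
  rw [← continuousOn_univ, sinhRatio, continuousOn_update_iff, ← compl_eq_univ_sdiff]
  refine ⟨fun x hx => ?_, fun _ => ?_⟩
  · exact ((by fun_prop : Continuous fun x => sinh (b * x)).continuousAt.div
      (by fun_prop : Continuous fun x => sinh (c * x)).continuousAt
      (sinh_ne_zero.2 (mul_ne_zero hc hx))).continuousWithinAt
  · refine ((tendsto_sinh_mul_div_self b).div (tendsto_sinh_mul_div_self c) hc).congr' ?_
    filter_upwards [self_mem_nhdsWithin] with x hx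
    exact div_div_div_cancel_right₀ hx _ _

theorem strictAntiOn (hb : 0 < b) (hbc : b < c) : StrictAntiOn (sinhRatio b c) (Ici 0) := by
  refine strictAntiOn_of_hasDerivWithinAt_neg (convex_Ici 0)
    (f' := fun x => (b * cosh (b * x) * sinh (c * x) - c * sinh (b * x) * cosh (c * x)) /
      sinh (c * x) ^ 2)
    (continuous (hb.trans hbc).ne').continuousOn ?_ ?_ <;> rw [interior_Ici] <;> intro x hx <;>
    have hsinh : 0 < sinh (c * x) := sinh_pos_iff.2 (mul_pos (hb.trans hbc) hx)
  · have hF : sinhRatio b c =ᶠ[𝓝 x] fun y => sinh (b * y) / sinh (c * y) := by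
      filter_upwards [isOpen_ne.mem_nhds (mem_Ioi.1 hx).ne'] with y hy
      exact apply_of_ne hy
    exact ((hasDerivAt_sinh_mul_div_sinh_mul hsinh.ne').congr_of_eventuallyEq hF).hasDerivWithinAt
  · exact div_neg_of_neg_of_pos (sub_neg.2 (mul_cosh_mul_sinh_lt_mul_sinh_mul_cosh hb hbc hx))
      (pow_pos hsinh 2)

theorem tendsto_atTop (hb : 0 < b) (hbc : b < c) : Tendsto (sinhRatio b c) atTop (𝓝 0) := by
  have hdecay : Tendsto (fun x => (cosh ((c - b) * x))⁻¹) atTop (𝓝 0) :=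
    tendsto_inv_atTop_zero.comp
      (tendsto_cosh_atTop.comp (tendsto_id.const_mul_atTop (sub_pos.2 hbc)))
  refine squeeze_zero' (.of_forall fun x => (pos hb (hb.trans hbc) x).le) ?_ hdecay
  filter_upwards [eventually_gt_atTop 0] with x hx
  have hsinh : sinh (c * x) =
      sinh (b * x) * cosh ((c - b) * x) + cosh (b * x) * sinh ((c - b) * x) := by
    rw [← sinh_add]
    congr 1
    ring
  have hcross := mul_pos (cosh_pos (b * x)) (sinh_pos_iff.2 (mul_pos (sub_pos.2 hbc) hx))
  rw [apply_of_ne hx.ne', div_le_iff₀ (sinh_pos_iff.2 (mul_pos (hb.trans hbc) hx)),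
    inv_mul_eq_div, le_div_iff₀ (cosh_pos _)]
  linarith

theorem range_eq (hb : 0 < b) (hbc : b < c) : range (sinhRatio b c) = Ioc 0 (b / c) := by
  rw [even.range_eq_Ioc (pos hb (hb.trans hbc)) (continuous (hb.trans hbc).ne')
    (strictAntiOn hb hbc).antitoneOn (tendsto_atTop hb hbc), apply_zero]

end sinhRatio

/-- `F(x) = sinh((π−α)x)/sinh(πx)` (with `F(0) = 1 − α/π`), `0 < α < π`,
is even, positive, continuous, strictly decreasing on `[0,∞)`, tends to `0` at `+∞`,
and has range `(0, 1 − α/π]`. -/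
theorem wedge_symbol_properties (α : ℝ) (hα : 0 < α) (hαπ : α < π) :
    ∀ F : ℝ → ℝ,
      F = (fun x => if x = 0 then 1 - α / π
            else Real.sinh ((π - α) * x) / Real.sinh (π * x)) →
      (∀ x, F (-x) = F x) ∧
      (∀ x, 0 < F x) ∧
      Continuous F ∧
      StrictAntiOn F (Set.Ici 0) ∧
      Tendsto F atTop (nhds 0) ∧
      Set.range F = Set.Ioc 0 (1 - α / π) := by
  intro F hF
  have hb : 0 < π - α := sub_pos.2 hαπ
  have hbc : π - α < π := sub_lt_self π hα
  have hF0 : 1 - α / π = (π - α) / π := by field_simp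
  have hF : F = sinhRatio (π - α) π := by
    ext x
    rw [hF, hF0, sinhRatio, Function.update_apply]
  subst hF
  exact ⟨sinhRatio.even, sinhRatio.pos hb pi_pos, sinhRatio.continuous pi_ne_zero,
    sinhRatio.strictAntiOn hb hbc, sinhRatio.tendsto_atTop hb hbc,
    hF0 ▸ sinhRatio.range_eq hb hbc⟩
end

section
/- For 0 < α < π and x ∈ ℝ, the value sinh((π−α)x)/sinh(πx) (with value 1−α/π at x=0) satisfies 0 < sinh((π−α)x)/sinh(πx) ≤ 1 − α/π. -/
open Real

lemma sinh_le_mul_cosh_aux : MonotoneOn (fun y : ℝ => y * Real.cosh y - Real.sinh y) (Set.Ici 0) := by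
  apply monotoneOn_of_deriv_nonneg (convex_Ici 0)
  · exact (Continuous.sub (continuous_id.mul Real.continuous_cosh) Real.continuous_sinh).continuousOn
  · intro y hy
    exact ((hasDerivAt_id y).mul (Real.hasDerivAt_cosh y)).sub (Real.hasDerivAt_sinh y)
      |>.differentiableAt.differentiableWithinAt
  · intro y hy
    rw [interior_Ici] at hy
    have h : HasDerivAt (fun y : ℝ => y * Real.cosh y - Real.sinh y)
        (1 * Real.cosh y + y * Real.sinh y - Real.cosh y) y :=
      (((hasDerivAt_id y).mul (Real.hasDerivAt_cosh y))).sub (Real.hasDerivAt_sinh y)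
    rw [h.deriv]
    have : 0 ≤ y * Real.sinh y := mul_nonneg hy.le (Real.sinh_nonneg_iff.mpr hy.le)
    nlinarith

lemma sinh_le_mul_cosh (x : ℝ) (hx : 0 ≤ x) : Real.sinh x ≤ x * Real.cosh x := by
  have := sinh_le_mul_cosh_aux (Set.self_mem_Ici) hx hx
  simp at this
  linarith

lemma sinh_div_mono : MonotoneOn (fun x : ℝ => Real.sinh x / x) (Set.Ioi 0) := by
  apply monotoneOn_of_deriv_nonneg (convex_Ioi 0)
  · exact ContinuousOn.div Real.continuous_sinh.continuousOn continuousOn_id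
      (fun x hx => ne_of_gt hx)
  · intro x hx
    rw [interior_Ioi] at hx
    exact ((Real.hasDerivAt_sinh x).div (hasDerivAt_id x) (ne_of_gt hx)).differentiableAt.differentiableWithinAt
  · intro x hx
    rw [interior_Ioi] at hx
    have h : HasDerivAt (fun x : ℝ => Real.sinh x / x)
        ((Real.cosh x * x - Real.sinh x * 1) / x ^ 2) x :=
      (Real.hasDerivAt_sinh x).div (hasDerivAt_id x) (ne_of_gt hx)
    rw [h.deriv]
    have := sinh_le_mul_cosh x hx.le
    have : 0 ≤ Real.cosh x * x - Real.sinh x * 1 := by nlinarith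
    positivity

lemma mul_sinh_le (u v : ℝ) (hu : 0 < u) (huv : u ≤ v) : v * Real.sinh u ≤ u * Real.sinh v := by
  have hv : 0 < v := lt_of_lt_of_le hu huv
  have := sinh_div_mono hu hv huv
  rw [div_le_div_iff₀ hu hv] at this
  linarith

/-- For `0 < α < π` and `x ∈ ℝ`, the value `sinh((π−α)x)/sinh(πx)`
(with value `1 − α/π` at `x = 0`) satisfies `0 < · ≤ 1 − α/π`. -/
theorem wedge_symbol_bounds (α x : ℝ) (hα : 0 < α) (hαπ : α < π) :
    0 < (if x = 0 then 1 - α / π else Real.sinh ((π - α) * x) / Real.sinh (π * x)) ∧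
    (if x = 0 then 1 - α / π else Real.sinh ((π - α) * x) / Real.sinh (π * x))
      ≤ 1 - α / π := by
  have hπ : 0 < π := Real.pi_pos
  have hc : 0 < π - α := by linarith
  have key : ∀ t : ℝ, 0 < t →
      0 < Real.sinh ((π - α) * t) / Real.sinh (π * t) ∧
      Real.sinh ((π - α) * t) / Real.sinh (π * t) ≤ 1 - α / π := by
    intro t ht
    have h1 : 0 < Real.sinh ((π - α) * t) := Real.sinh_pos_iff.mpr (by positivity)
    have h2 : 0 < Real.sinh (π * t) := Real.sinh_pos_iff.mpr (by positivity)
    constructor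
    · positivity
    · have h3 := mul_sinh_le ((π - α) * t) (π * t) (by positivity)
        (by nlinarith)
      rw [div_le_iff₀ h2]
      have : 1 - α / π = (π - α) / π := by field_simp
      rw [this, div_mul_eq_mul_div, le_div_iff₀ hπ]
      nlinarith
  rcases lt_trichotomy x 0 with hx | hx | hx
  · rw [if_neg (ne_of_lt hx)]
    have := key (-x) (by linarith)
    have e1 : (π - α) * x = -((π - α) * (-x)) := by ring
    have e2 : π * x = -(π * (-x)) := by ring
    rw [e1, e2, Real.sinh_neg, Real.sinh_neg, neg_div_neg_eq]
    exact this
  · rw [if_pos hx]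
    constructor
    · have : α / π < 1 := (div_lt_one hπ).mpr hαπ
      linarith
    · exact le_refl _
  · rw [if_neg (ne_of_gt hx)]
    exact key x hx
end

section
/- Let A be the generator of the dilation group on L²_a(W_α), i.e. Af(z) = −i(f(z) + z f′(z)) on its natural domain. For t ∈ ℝ, let M_t be multiplication by z^{it} (principal branch). Then M_t is a bounded invertible operator on L²_a(W_α) and M_t^{-1} A M_t = A + tI on the domain of A. -/
open Real Complex Set

/-- The wedge (sector) of aperture `α`. -/
def Wedge (α : ℝ) : Set ℂ := {z : ℂ | z ≠ 0 ∧ |Complex.arg z| < α / 2}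

namespace Complex

theorem norm_cpow_ofReal_mul_I {z : ℂ} (hz : z ≠ 0) (t : ℝ) :
    ‖z ^ ((t : ℂ) * I)‖ = Real.exp (-(arg z * t)) := by
  simp [norm_cpow_of_ne_zero hz, Real.exp_neg]

theorem norm_cpow_ofReal_mul_I_mem_Icc {z : ℂ} (hz : z ≠ 0) (t : ℝ) :
    ‖z ^ ((t : ℂ) * I)‖ ∈ Icc (Real.exp (-(|t| * π))) (Real.exp (|t| * π)) := by
  have harg : |arg z * t| ≤ |t| * π := by
    rw [abs_mul, mul_comm]
    exact mul_le_mul_of_nonneg_left (abs_arg_le_pi z) (abs_nonneg t)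
  rw [norm_cpow_ofReal_mul_I hz]
  obtain ⟨hlo, hhi⟩ := abs_le.mp harg
  exact ⟨Real.exp_le_exp.mpr (by linarith), Real.exp_le_exp.mpr (by linarith)⟩

theorem mul_deriv_cpow_const_mul {c z : ℂ} {f : ℂ → ℂ} (hz : z ∈ slitPlane)
    (hf : DifferentiableAt ℂ f z) :
    z * deriv (fun w => w ^ c * f w) z = z ^ c * (c * f z + z * deriv f z) := by
  have hz0 : z ≠ 0 := slitPlane_ne_zero hz
  have hderiv : HasDerivAt (fun w => w ^ c * f w)
      (c * z ^ (c - 1) * f z + z ^ c * deriv f z) z :=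
    (hasStrictDerivAt_cpow_const hz).hasDerivAt.mul hf.hasDerivAt
  rw [hderiv.deriv, cpow_sub _ _ hz0, cpow_one]
  field_simp

end Complex

theorem wedge_subset_slitPlane {α : ℝ} (hα : α ≤ 2 * π) : Wedge α ⊆ slitPlane := by
  rintro z ⟨hz0, harg⟩
  refine mem_slitPlane_iff_arg.mpr ⟨fun hπ => ?_, hz0⟩
  rw [hπ, abs_of_pos pi_pos] at harg
  linarith

theorem wedge_generator_similarity_general (α : ℝ) (hα2 : α < 2 * π) (t : ℝ) :
    (∃ c C : ℝ, 0 < c ∧ ∀ z ∈ Wedge α,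
      c ≤ ‖z ^ ((t : ℂ) * Complex.I)‖ ∧
      ‖z ^ ((t : ℂ) * Complex.I)‖ ≤ C) ∧
    ∀ f : ℂ → ℂ, ∀ z ∈ Wedge α, DifferentiableAt ℂ f z →
      -Complex.I * ((fun w : ℂ => w ^ ((t : ℂ) * Complex.I) * f w) z
          + z * deriv (fun w : ℂ => w ^ ((t : ℂ) * Complex.I) * f w) z)
        = z ^ ((t : ℂ) * Complex.I) *
            (-Complex.I * (f z + z * deriv f z) + (t : ℂ) * f z) := by
  refine ⟨⟨_, _, Real.exp_pos _, fun z hz => norm_cpow_ofReal_mul_I_mem_Icc hz.1 t⟩, ?_⟩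
  intro f z hz hf
  rw [mul_deriv_cpow_const_mul (wedge_subset_slitPlane hα2.le hz) hf]
  linear_combination (-(t : ℂ) * z ^ ((t : ℂ) * I) * f z) * I_sq

/-- On the wedge, multiplication `M_t` by `z^{it}` (principal branch) is
bounded above and below, and the generator `A f = −i(f + z f′)` of the dilation group
satisfies the commutation relation `M_t⁻¹ A M_t = A + t I`:
`A (M_t f) = M_t (A f) + t · M_t f` pointwise on the wedge. -/
theorem wedge_generator_similarity (α : ℝ) (hα : 0 < α) (hα2 : α < 2 * π) (t : ℝ) :
    (∃ c C : ℝ, 0 < c ∧ ∀ z ∈ Wedge α,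
      c ≤ ‖z ^ ((t : ℂ) * Complex.I)‖ ∧
      ‖z ^ ((t : ℂ) * Complex.I)‖ ≤ C) ∧
    ∀ f : ℂ → ℂ, ∀ z ∈ Wedge α, DifferentiableAt ℂ f z →
      -Complex.I * ((fun w : ℂ => w ^ ((t : ℂ) * Complex.I) * f w) z
          + z * deriv (fun w : ℂ => w ^ ((t : ℂ) * Complex.I) * f w) z)
        = z ^ ((t : ℂ) * Complex.I) *
            (-Complex.I * (f z + z * deriv f z) + (t : ℂ) * f z) :=
  wedge_generator_similarity_general α hα2 t
end

section
/- Let H be a Hilbert space of holomorphic functions on a domain Ω ⊂ ℂ with reproducing kernels k_z, and fix z ∈ Ω. If f ∈ H is orthogonal to the function w ↦ (d/dρ)ⁿ|_{ρ=1} k_z(ρw) for all n ≥ 0, and these derivatives exist in H, and the pairing gives ⟨f, (d/dρ)ⁿ|_{ρ=1} k_z(ρ·)⟩ = (d/dρ)ⁿ|_{ρ=1} [ρ^{−2} f(z/ρ)] in the sector case, then f^{(n)}(z) = 0 for all n ≥ 0, and hence f = 0 by the identity theorem. -/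
/-!
The function `F ζ = ζ⁻² f(z/ζ)` is holomorphic near `ζ = 1`, and along the real axis its
derivatives at `1` are its complex derivatives there. The hypothesis therefore says that every
derivative of `F` at `1` vanishes, so `F` vanishes near `1`; undoing the substitution `w = z/ζ`,
`f` vanishes near `z`. The identity theorem on the connected wedge then gives `f = 0`.
-/

open Real Complex Set

open Filter Topology

lemma wedge_eq_slitPlane_inter {α : ℝ} (hα : α ≤ 2 * π) :
    Wedge α = slitPlane ∩ (fun z => |arg z|) ⁻¹' Iio (α / 2) := by
  ext z
  simp only [Wedge, mem_ofPred_eq, mem_inter_iff, mem_preimage, mem_Iio, mem_slitPlane_iff_arg]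
  refine ⟨fun ⟨hz, harg⟩ => ⟨⟨fun hπ => ?_, hz⟩, harg⟩,
    fun ⟨⟨_, hz⟩, harg⟩ => ⟨hz, harg⟩⟩
  rw [hπ, abs_of_pos pi_pos] at harg
  linarith

lemma isOpen_wedge {α : ℝ} (hα : α ≤ 2 * π) : IsOpen (Wedge α) := by
  rw [wedge_eq_slitPlane_inter hα]
  exact continuousOn_arg.abs.isOpen_inter_preimage isOpen_slitPlane isOpen_Iio

lemma wedge_eq_image_polar {α : ℝ} (hα : α ≤ 2 * π) :
    Wedge α = (fun p : ℝ × ℝ => (p.1 : ℂ) * exp (p.2 * I)) ''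
      (Ioi 0 ×ˢ Ioo (-(α / 2)) (α / 2)) := by
  ext w
  constructor
  · rintro ⟨hw0, hwarg⟩
    rw [abs_lt] at hwarg
    exact ⟨(‖w‖, arg w), ⟨norm_pos_iff.mpr hw0, hwarg⟩, norm_mul_exp_arg_mul_I w⟩
  · rintro ⟨⟨r, θ⟩, ⟨hr, hθ⟩, rfl⟩
    have harg : arg ((r : ℂ) * exp (θ * I)) = θ := by
      rw [arg_real_mul _ hr, exp_mul_I,
        arg_cos_add_sin_mul_I ⟨by linarith [hθ.1], by linarith [hθ.2]⟩]
    refine ⟨mul_ne_zero (ofReal_ne_zero.mpr hr.ne') (exp_ne_zero _), ?_⟩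
    rw [harg, abs_lt]
    exact hθ

lemma isPreconnected_wedge {α : ℝ} (hα : α ≤ 2 * π) : IsPreconnected (Wedge α) := by
  rw [wedge_eq_image_polar hα]
  exact ((convex_Ioi 0).prod (convex_Ioo _ _)).isPreconnected.image _ (by fun_prop)

lemma AnalyticAt.iteratedDeriv_comp_ofReal {F : ℂ → ℂ} {x : ℝ} (hF : AnalyticAt ℂ F x)
    (n : ℕ) : iteratedDeriv n (fun ρ : ℝ => F ρ) x = iteratedDeriv n F x := by
  induction n generalizing F with
  | zero => simp
  | succ n ih =>
    have hderiv : deriv (fun ρ : ℝ => F ρ) =ᶠ[𝓝 x] fun ρ : ℝ => deriv F ρ := by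
      filter_upwards [continuous_ofReal.continuousAt.eventually hF.eventually_analyticAt]
        with ρ hρ
      exact hρ.differentiableAt.hasDerivAt.comp_ofReal.deriv
    rw [iteratedDeriv_succ', iteratedDeriv_succ', hderiv.iteratedDeriv_eq n]
    exact ih hF.deriv

lemma AnalyticAt.eventually_eq_zero_of_iteratedDeriv_eq_zero {𝕜 E : Type*}
    [NontriviallyNormedField 𝕜] [CharZero 𝕜] [NormedAddCommGroup E] [NormedSpace 𝕜 E]
    [CompleteSpace E] {f : 𝕜 → E} {x : 𝕜} (hf : AnalyticAt 𝕜 f x)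
    (h : ∀ n, iteratedDeriv n f x = 0) : ∀ᶠ y in 𝓝 x, f y = 0 := by
  refine analyticOrderAt_eq_top.mp (ENat.eq_top_iff_forall_ge.mpr fun n => ?_)
  exact (natCast_le_analyticOrderAt_iff_iteratedDeriv_eq_zero hf).mpr fun i _ => h i

lemma eventually_eq_zero_of_eventually_zpow_mul_comp_div {f : ℂ → ℂ} {z : ℂ} (hz : z ≠ 0)
    (m : ℤ) (h : ∀ᶠ ζ in 𝓝 1, ζ ^ m * f (z / ζ) = 0) : ∀ᶠ w in 𝓝 z, f w = 0 := by
  have hdiv : Tendsto (fun w => z / w) (𝓝 z) (𝓝 1) := by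
    rw [← div_self hz]
    exact tendsto_const_nhds.div tendsto_id hz
  filter_upwards [hdiv.eventually h, isOpen_ne.mem_nhds hz] with w hw hw0
  rw [div_div_cancel₀ hz] at hw
  exact (mul_eq_zero.mp hw).resolve_left (zpow_ne_zero _ (div_ne_zero hz hw0))

theorem wedge_kernel_cyclic_general (α : ℝ) (hα2 : α < 2 * π)
    (f : ℂ → ℂ) (hf : DifferentiableOn ℂ f (Wedge α))
    (z : ℂ) (hz : z ∈ Wedge α)
    (horth : ∀ n : ℕ,
      iteratedDeriv n (fun ρ : ℝ => ((ρ : ℂ)) ^ (-2 : ℤ) * f (z / (ρ : ℂ))) 1 = 0) :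
    (∀ n : ℕ, iteratedDeriv n f z = 0) ∧ ∀ w ∈ Wedge α, f w = 0 := by
  have hfan : AnalyticOnNhd ℂ f (Wedge α) := hf.analyticOnNhd (isOpen_wedge hα2.le)
  set F : ℂ → ℂ := fun ζ => ζ ^ (-2 : ℤ) * f (z / ζ)
  have hFan : AnalyticAt ℂ F (1 : ℝ) := by
    have hfz : AnalyticAt ℂ f (z / (1 : ℝ)) := by simpa using hfan z hz
    exact (analyticAt_id.zpow (by simp)).mul
      (hfz.comp (analyticAt_const.div analyticAt_id (by simp)))
  have hFder (n : ℕ) : iteratedDeriv n F 1 = 0 := by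
    simpa using (hFan.iteratedDeriv_comp_ofReal n).symm.trans (horth n)
  have hfz : f =ᶠ[𝓝 z] 0 := eventually_eq_zero_of_eventually_zpow_mul_comp_div hz.1 (-2)
    (hFan.eventually_eq_zero_of_iteratedDeriv_eq_zero hFder)
  exact ⟨fun n => (hfz.iteratedDeriv_eq n).trans iteratedDeriv_const_zero,
    fun w hw => hfan.eqOn_zero_of_preconnected_of_eventuallyEq_zero
      (isPreconnected_wedge hα2.le) hz hfz hw⟩

/-- Cyclicity of the kernel for the dilation generator: if `f` is
holomorphic on the wedge and, for all `n ≥ 0`, the orthogonality pairing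
`⟨f, (d/dρ)ⁿ|_{ρ=1} k_z(ρ·)⟩ = (d/dρ)ⁿ|_{ρ=1} [ρ⁻² f(z/ρ)]` vanishes, then all
derivatives `f⁽ⁿ⁾(z)` vanish, and hence `f = 0` on the wedge by the identity
theorem. -/
theorem wedge_kernel_cyclic (α : ℝ) (hα : 0 < α) (hα2 : α < 2 * π)
    (f : ℂ → ℂ) (hf : DifferentiableOn ℂ f (Wedge α))
    (z : ℂ) (hz : z ∈ Wedge α)
    (horth : ∀ n : ℕ,
      iteratedDeriv n (fun ρ : ℝ => ((ρ : ℂ)) ^ (-2 : ℤ) * f (z / (ρ : ℂ))) 1 = 0) :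
    (∀ n : ℕ, iteratedDeriv n f z = 0) ∧ ∀ w ∈ Wedge α, f w = 0 :=
  wedge_kernel_cyclic_general α hα2 f hf z hz horth
end

section
/- Suppose K₁, …, K_N are bounded operators on a Hilbert space H with K_j = M_j K_j M_j for bounded operators M_j satisfying M_j M_k = 0 for j ≠ k (disjoint cut-offs). If λ ≠ 0 and (f_n) is a bounded sequence with no convergent subsequence such that (K_k − λ)f_n → 0 for some k, then M_j f_n → 0 for all j ≠ k, and (f_n) is a singular sequence for Σ_{j=1}^N K_j at λ. Hence σ_ea(K_k) \ {0} ⊆ σ_ea(Σ_j K_j) for each k. -/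
open Filter Topology

variable {H : Type*} [NormedAddCommGroup H] [InnerProductSpace ℂ H] [CompleteSpace H]

/-- The essential approximate point spectrum, defined via singular sequences. -/
def essApproxSpectrum (T : H →L[ℂ] H) : Set ℂ :=
  {l : ℂ | ∃ f : ℕ → H,
    (∃ C : ℝ, ∀ n, ‖f n‖ ≤ C) ∧
    (¬ ∃ g : ℕ → ℕ, StrictMono g ∧ ∃ x : H, Tendsto (f ∘ g) atTop (nhds x)) ∧
    Tendsto (fun n => T (f n) - l • f n) atTop (nhds 0)}

/-- If `K_j = M_j K_j M_j` with pairwise disjoint cut-offs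
(`M_j M_k = 0` for `j ≠ k`), and `(f_n)` is a singular sequence for `K_k` at `λ ≠ 0`,
then `M_j f_n → 0` for all `j ≠ k` and `(f_n)` is a singular sequence for `Σ_j K_j`
at `λ`; hence `σ_ea(K_k) \ {0} ⊆ σ_ea(Σ_j K_j)` for each `k`. -/
theorem singular_sequence_localization (N : ℕ) (K M : Fin N → H →L[ℂ] H)
    (hfac : ∀ j, K j = M j ∘L K j ∘L M j)
    (hdisj : ∀ j k, j ≠ k → M j ∘L M k = 0) :
    (∀ (lam : ℂ), lam ≠ 0 → ∀ (k : Fin N) (f : ℕ → H),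
      (∃ C : ℝ, ∀ n, ‖f n‖ ≤ C) →
      (¬ ∃ g : ℕ → ℕ, StrictMono g ∧ ∃ x : H, Tendsto (f ∘ g) atTop (nhds x)) →
      Tendsto (fun n => K k (f n) - lam • f n) atTop (nhds 0) →
      (∀ j, j ≠ k → Tendsto (fun n => M j (f n)) atTop (nhds (0 : H))) ∧
      Tendsto (fun n => (∑ j, K j) (f n) - lam • f n) atTop (nhds 0)) ∧
    ∀ k : Fin N, essApproxSpectrum (K k) \ {0} ⊆ essApproxSpectrum (∑ j, K j) := by
  have main : ∀ (lam : ℂ), lam ≠ 0 → ∀ (k : Fin N) (f : ℕ → H),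
      Tendsto (fun n => K k (f n) - lam • f n) atTop (nhds 0) →
      (∀ j, j ≠ k → Tendsto (fun n => M j (f n)) atTop (nhds (0 : H))) ∧
      Tendsto (fun n => (∑ j, K j) (f n) - lam • f n) atTop (nhds 0) := by
    intro lam hlam k f hf
    have hMK : ∀ j, j ≠ k → (M j ∘L K k : H →L[ℂ] H) = 0 := by
      intro j hj
      rw [hfac k, ← ContinuousLinearMap.comp_assoc, ← ContinuousLinearMap.comp_assoc,
        hdisj j k hj, ContinuousLinearMap.zero_comp, ContinuousLinearMap.zero_comp]
    have hM : ∀ j, j ≠ k → Tendsto (fun n => M j (f n)) atTop (nhds (0 : H)) := by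
      intro j hj
      have h1 : Tendsto (fun n => M j (K k (f n) - lam • f n)) atTop (nhds 0) := by
        simpa only [Function.comp_def, map_zero] using ((M j).continuous.tendsto 0).comp hf
      have h2 : ∀ n, M j (K k (f n) - lam • f n) = (-lam) • M j (f n) := by
        intro n
        have h0 : M j (K k (f n)) = 0 := by
          have := congrArg (fun T : H →L[ℂ] H => T (f n)) (hMK j hj)
          simpa using this
        simp [map_sub, map_smul, h0, neg_smul]
      rw [funext h2] at h1
      have h3 := h1.const_smul (-lam⁻¹)
      simpa [smul_smul, neg_mul_neg, inv_mul_cancel₀ hlam] using h3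
    have hKj : ∀ j, j ≠ k → Tendsto (fun n => K j (f n)) atTop (nhds (0 : H)) := by
      intro j hj
      have heq : ∀ n, K j (f n) = (M j ∘L K j) (M j (f n)) := by
        intro n; conv_lhs => rw [hfac j]
        rfl
      have h1 : Tendsto (fun n => (M j ∘L K j) (M j (f n))) atTop
          (nhds ((M j ∘L K j) 0)) := ((M j ∘L K j).continuous.tendsto 0).comp (hM j hj)
      rw [funext heq]
      simpa using h1
    refine ⟨hM, ?_⟩
    have hsum : ∀ n, (∑ j, K j) (f n) - lam • f n
        = (K k (f n) - lam • f n) + ∑ j ∈ Finset.univ.erase k, K j (f n) := by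
      intro n
      rw [ContinuousLinearMap.sum_apply, ← Finset.add_sum_erase _ _ (Finset.mem_univ k)]
      abel
    have h2 : Tendsto (fun n => ∑ j ∈ Finset.univ.erase k, K j (f n)) atTop (nhds 0) := by
      have := tendsto_finset_sum (Finset.univ.erase k)
        (fun j hj => hKj j (Finset.ne_of_mem_erase hj))
      simpa using this
    rw [funext hsum]
    simpa using hf.add h2
  refine ⟨fun lam hlam k f _ _ hf => main lam hlam k f hf, ?_⟩
  intro k l hl
  obtain ⟨hl1, hl0⟩ := hl
  obtain ⟨f, hb, hnc, ht⟩ := hl1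
  exact ⟨f, hb, hnc, (main l hl0 k f ht).2⟩
end
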